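/- arXiv:2311.13056 — 4 statements merged into one kernel-verified Lean document; each statement's English description precedes it below -/
import Mathlib

section
/- Let e, r, r̃, f̃, Δ, ḟ ∈ ℝⁿ, θ̃, θ* ∈ ℝᵖ, Φ′ ∈ ℝ^{n×p}, and positive constants α₁, α₂, α₃, k_r, k_f, k_θ, γ₁, γ₂, γ₃, θ̄, with a scalar β satisfying β ≥ β₁ ≥ 0. Assume ‖Δ‖ ≤ γ₁, ‖ḟ‖ ≤ γ₂, ‖Φ′‖_F ≤ γ₃, and ‖θ*‖ ≤ θ̄. Then −α₁‖e‖² − k_r‖r‖² − α₂‖r̃‖² − k_f‖f̃‖² − (k_θ + β/2)‖θ̃‖² + rᵀΔ + f̃ᵀḟ − (α₃ − ½) θ̃ᵀ Φ′ᵀ Φ′ θ̃ + α₃ θ̃ᵀ Φ′ᵀ (f̃ − Δ) + k_θ θ̃ᵀθ* ≤ −λ₃ ( ‖e‖² + ‖r‖² + ‖r̃‖² + ‖f̃‖² + ‖θ̃‖² ) + c − (α₃ − ½) ‖Φ′ θ̃‖², where λ₃ = min{ α₁, k_r − γ₁/2, α₂, k_f − (γ₂ + α₃ γ₃)/2, (k_θ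 + β₁)/2 − α₃ γ₃ } and c = (γ₁ + γ₂ + k_θ θ̄² + α₃ γ₃ γ₁²)/2. -/
set_option maxHeartbeats 1000000
open Matrix
open scoped RealInnerProductSpace

lemma frob_norm_bound {n p : ℕ} (M : Matrix (Fin n) (Fin p) ℝ)
    (x : EuclideanSpace ℝ (Fin p)) :
    ‖Matrix.toEuclideanLin M x‖ ^ 2 ≤ (∑ i, ∑ j, (M i j) ^ 2) * ‖x‖ ^ 2 := by
  have hy : ‖Matrix.toEuclideanLin M x‖ ^ 2
      = ∑ i, (∑ j, M i j * x j) ^ 2 := by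
    rw [EuclideanSpace.norm_eq, Real.sq_sqrt (by positivity)]
    refine Finset.sum_congr rfl fun i _ => ?_
    rw [Real.norm_eq_abs, sq_abs]
    rfl
  have hx : ‖x‖ ^ 2 = ∑ j, (x j) ^ 2 := by
    rw [EuclideanSpace.norm_eq, Real.sq_sqrt (by positivity)]
    exact Finset.sum_congr rfl fun j _ => sq_abs _
  rw [hy, hx, Finset.sum_mul]
  refine Finset.sum_le_sum fun i _ => ?_
  exact Finset.sum_mul_sq_le_sq_mul_sq _ _ _

/-- The algebraic bound on `V̇` obtained from Young's inequality:
under the stated norm bounds, the right-hand side of the Lyapunov derivative is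
bounded by `−λ₃‖z‖² + c − (α₃ − ½)‖Φ′ θ̃‖²` with
`λ₃ = min{α₁, k_r − γ₁/2, α₂, k_f − (γ₂ + α₃ γ₃)/2, (k_θ + β₁)/2 − α₃ γ₃}` and
`c = (γ₁ + γ₂ + k_θ θ̄² + α₃ γ₃ γ₁²)/2`. -/
theorem vdot_young_bound {n p : ℕ}
    (e r rtil ftil Δ fdot : EuclideanSpace ℝ (Fin n))
    (θtil θstar : EuclideanSpace ℝ (Fin p))
    (Φ' : Matrix (Fin n) (Fin p) ℝ)
    (α₁ α₂ α₃ kr kf kθ γ₁ γ₂ γ₃ θbar β β₁ : ℝ)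
    (hα₁ : 0 < α₁) (hα₂ : 0 < α₂) (hα₃ : 0 < α₃) (hkr : 0 < kr) (hkf : 0 < kf)
    (hkθ : 0 < kθ) (hγ₁ : 0 < γ₁) (hγ₂ : 0 < γ₂) (hγ₃ : 0 < γ₃) (hθbar : 0 < θbar)
    (hβ₁ : 0 ≤ β₁) (hβ : β₁ ≤ β)
    (hΔ : ‖Δ‖ ≤ γ₁) (hfdot : ‖fdot‖ ≤ γ₂)
    (hΦ'F : Real.sqrt (∑ i, ∑ j, (Φ' i j) ^ 2) ≤ γ₃)
    (hθstar : ‖θstar‖ ≤ θbar) :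
    -α₁ * ‖e‖ ^ 2 - kr * ‖r‖ ^ 2 - α₂ * ‖rtil‖ ^ 2 - kf * ‖ftil‖ ^ 2
      - (kθ + β / 2) * ‖θtil‖ ^ 2 + ⟪r, Δ⟫ + ⟪ftil, fdot⟫
      - (α₃ - 1/2) * ‖Matrix.toEuclideanLin Φ' θtil‖ ^ 2
      + α₃ * ⟪Matrix.toEuclideanLin Φ' θtil, ftil - Δ⟫ + kθ * ⟪θtil, θstar⟫
    ≤ -(min α₁ (min (kr - γ₁ / 2) (min α₂ (min (kf - (γ₂ + α₃ * γ₃) / 2)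
            ((kθ + β₁) / 2 - α₃ * γ₃)))))
        * (‖e‖ ^ 2 + ‖r‖ ^ 2 + ‖rtil‖ ^ 2 + ‖ftil‖ ^ 2 + ‖θtil‖ ^ 2)
      + (γ₁ + γ₂ + kθ * θbar ^ 2 + α₃ * γ₃ * γ₁ ^ 2) / 2
      - (α₃ - 1/2) * ‖Matrix.toEuclideanLin Φ' θtil‖ ^ 2 := by
  set m := min α₁ (min (kr - γ₁ / 2) (min α₂ (min (kf - (γ₂ + α₃ * γ₃) / 2)
      ((kθ + β₁) / 2 - α₃ * γ₃)))) with hm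
  set y := Matrix.toEuclideanLin Φ' θtil with hyy
  -- bound on ‖y‖
  have hFnn : (0:ℝ) ≤ ∑ i, ∑ j, (Φ' i j) ^ 2 := by positivity
  have hF2 : (∑ i, ∑ j, (Φ' i j) ^ 2) ≤ γ₃ ^ 2 := by
    have := Real.sqrt_le_sqrt (Real.sq_sqrt hFnn ▸ le_refl (Real.sqrt (∑ i, ∑ j, (Φ' i j) ^ 2)))
    nlinarith [Real.sq_sqrt hFnn, hΦ'F, Real.sqrt_nonneg (∑ i, ∑ j, (Φ' i j) ^ 2)]
  have hy2 : ‖y‖ ^ 2 ≤ γ₃ ^ 2 * ‖θtil‖ ^ 2 := by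
    calc ‖y‖ ^ 2 ≤ (∑ i, ∑ j, (Φ' i j) ^ 2) * ‖θtil‖ ^ 2 := frob_norm_bound Φ' θtil
      _ ≤ γ₃ ^ 2 * ‖θtil‖ ^ 2 := by nlinarith [sq_nonneg ‖θtil‖]
  have hy : ‖y‖ ≤ γ₃ * ‖θtil‖ := by
    have h := Real.sqrt_le_sqrt hy2
    rwa [Real.sqrt_sq (norm_nonneg y),
      show γ₃ ^ 2 * ‖θtil‖ ^ 2 = (γ₃ * ‖θtil‖) ^ 2 by ring,
      Real.sqrt_sq (mul_nonneg hγ₃.le (norm_nonneg θtil))] at h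
  -- inner product bounds
  have h1 : ⟪r, Δ⟫ ≤ ‖r‖ * γ₁ := by
    calc ⟪r, Δ⟫ ≤ ‖r‖ * ‖Δ‖ := real_inner_le_norm _ _
      _ ≤ ‖r‖ * γ₁ := by nlinarith [norm_nonneg r]
  have h2 : ⟪ftil, fdot⟫ ≤ ‖ftil‖ * γ₂ := by
    calc ⟪ftil, fdot⟫ ≤ ‖ftil‖ * ‖fdot‖ := real_inner_le_norm _ _
      _ ≤ ‖ftil‖ * γ₂ := by nlinarith [norm_nonneg ftil]
  have h3 : ⟪θtil, θstar⟫ ≤ ‖θtil‖ * θbar := by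
    calc ⟪θtil, θstar⟫ ≤ ‖θtil‖ * ‖θstar‖ := real_inner_le_norm _ _
      _ ≤ ‖θtil‖ * θbar := by nlinarith [norm_nonneg θtil]
  have h4 : α₃ * ⟪y, ftil - Δ⟫ ≤ α₃ * γ₃ * ‖θtil‖ ^ 2
      + α₃ * γ₃ / 2 * ‖ftil‖ ^ 2 + α₃ * γ₃ * γ₁ ^ 2 / 2 := by
    have hcs := real_inner_le_norm y (ftil - Δ)
    have hsub : ‖ftil - Δ‖ ≤ ‖ftil‖ + γ₁ := le_trans (norm_sub_le _ _) (by linarith)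
    have hy4 : ⟪y, ftil - Δ⟫ ≤ γ₃ * ‖θtil‖ * (‖ftil‖ + γ₁) := by
      calc ⟪y, ftil - Δ⟫ ≤ ‖y‖ * ‖ftil - Δ‖ := hcs
        _ ≤ γ₃ * ‖θtil‖ * (‖ftil‖ + γ₁) := by
            apply mul_le_mul hy hsub (norm_nonneg _)
            exact mul_nonneg hγ₃.le (norm_nonneg θtil)
    nlinarith [mul_nonneg (mul_nonneg hα₃.le hγ₃.le) (sq_nonneg (‖θtil‖ - ‖ftil‖)),
      mul_nonneg (mul_nonneg hα₃.le hγ₃.le) (sq_nonneg (‖θtil‖ - γ₁)), hα₃]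
  have A1 : ⟪r, Δ⟫ ≤ γ₁ / 2 * ‖r‖ ^ 2 + γ₁ / 2 := by
    nlinarith [mul_nonneg hγ₁.le (sq_nonneg (‖r‖ - 1))]
  have A2 : ⟪ftil, fdot⟫ ≤ γ₂ / 2 * ‖ftil‖ ^ 2 + γ₂ / 2 := by
    nlinarith [mul_nonneg hγ₂.le (sq_nonneg (‖ftil‖ - 1))]
  have A3 : kθ * ⟪θtil, θstar⟫ ≤ kθ / 2 * ‖θtil‖ ^ 2 + kθ / 2 * θbar ^ 2 := by
    nlinarith [mul_nonneg hkθ.le (sq_nonneg (‖θtil‖ - θbar)), hkθ]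
  -- min facts
  have m1 : m ≤ α₁ := min_le_left _ _
  have m2 : m ≤ kr - γ₁ / 2 := le_trans (min_le_right _ _) (min_le_left _ _)
  have m3 : m ≤ α₂ := le_trans (min_le_right _ _) (le_trans (min_le_right _ _) (min_le_left _ _))
  have m4 : m ≤ kf - (γ₂ + α₃ * γ₃) / 2 := le_trans (min_le_right _ _)
    (le_trans (min_le_right _ _) (le_trans (min_le_right _ _) (min_le_left _ _)))
  have m5 : m ≤ (kθ + β₁) / 2 - α₃ * γ₃ := le_trans (min_le_right _ _)
    (le_trans (min_le_right _ _) (le_trans (min_le_right _ _) (min_le_right _ _)))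
  have B1 : m * ‖e‖ ^ 2 ≤ α₁ * ‖e‖ ^ 2 := mul_le_mul_of_nonneg_right m1 (sq_nonneg _)
  have B2 : m * ‖r‖ ^ 2 ≤ (kr - γ₁ / 2) * ‖r‖ ^ 2 :=
    mul_le_mul_of_nonneg_right m2 (sq_nonneg _)
  have B3 : m * ‖rtil‖ ^ 2 ≤ α₂ * ‖rtil‖ ^ 2 := mul_le_mul_of_nonneg_right m3 (sq_nonneg _)
  have B4 : m * ‖ftil‖ ^ 2 ≤ (kf - (γ₂ + α₃ * γ₃) / 2) * ‖ftil‖ ^ 2 :=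
    mul_le_mul_of_nonneg_right m4 (sq_nonneg _)
  have B5 : m * ‖θtil‖ ^ 2 ≤ ((kθ + β₁) / 2 - α₃ * γ₃) * ‖θtil‖ ^ 2 :=
    mul_le_mul_of_nonneg_right m5 (sq_nonneg _)
  have B6 : β₁ * ‖θtil‖ ^ 2 ≤ β * ‖θtil‖ ^ 2 := mul_le_mul_of_nonneg_right hβ (sq_nonneg _)
  linarith
end

section
/- Let e, r, r̃, f̃ : [0,∞) → ℝⁿ and θ̃ : [0,∞) → ℝᵖ be differentiable, let Γ : [0,∞) → ℝ^{p×p} be differentiable with Γ(t) symmetric positive definite for all t, and let Φ′ : [0,∞) → ℝ^{n×p}, Δ, ḟ_sig : [0,∞) → ℝⁿ, β : [0,∞) → ℝ, and θ* ∈ ℝᵖ, with constants α₁, α₂, α₃, k_r, k_f, k_θ ∈ ℝ. Suppose for all t: ė = r − α₁ e; ṙ = Φ′ θ̃ + Δ − e − k_r r; d r̃/dt = f̃ − α₂ r̃; d f̃/dt = ḟ_sig − k_f f̃ − r̃; d(Γ⁻¹)/dt = −β Γ⁻¹ + Φ′ᵀ Φ′; and d θ̃/dt = −Γ(t) q(t)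 where q : [0,∞) → ℝᵖ satisfies θ̃ᵀ q ≥ θ̃ᵀ ( −k_θ (θ* − θ̃) + Φ′ᵀ ( r + α₃ E ) ) with E := Φ′ θ̃ − f̃ + Δ. Define V(t) = ½‖e‖² + ½‖r‖² + ½‖r̃‖² + ½‖f̃‖² + ½ θ̃ᵀ Γ⁻¹ θ̃ (all evaluated at t). Then for all t: dV/dt ≤ −α₁‖e‖² − k_r‖r‖² − α₂‖r̃‖² − k_f‖f̃‖² − k_θ‖θ̃‖² − (β/2) θ̃ᵀ Γ⁻¹ θ̃ + rᵀΔ + f̃ᵀḟ_sig − (α₃ − ½)‖Φ′ θ̃‖² + α₃ θ̃ᵀ Φ′ᵀ (f̃ − Δ) + k_θ θ̃ᵀ θ*. -/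
open Matrix
open scoped RealInnerProductSpace

section LyapAux

lemma euclid_apply' {m k : ℕ} (M : Matrix (Fin m) (Fin k) ℝ) (v : EuclideanSpace ℝ (Fin k))
    (i : Fin m) : Matrix.toEuclideanLin M v i = ∑ j, M i j * v j := by
  simp [Matrix.toEuclideanLin_apply, Matrix.mulVec, dotProduct]

lemma inner_eq_sum' {k : ℕ} (x y : EuclideanSpace ℝ (Fin k)) : ⟪x, y⟫ = ∑ i, x i * y i := by
  simp [PiLp.inner_apply]; exact Finset.sum_congr rfl fun i _ => mul_comm _ _

lemma inner_toE' {m k : ℕ} (M : Matrix (Fin m) (Fin k) ℝ) (x : EuclideanSpace ℝ (Fin m))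
    (y : EuclideanSpace ℝ (Fin k)) :
    ⟪x, Matrix.toEuclideanLin M y⟫ = ∑ i, ∑ j, x i * (M i j * y j) := by
  simp [inner_eq_sum', euclid_apply', Finset.mul_sum]

lemma transpose_inner' {m k : ℕ} (M : Matrix (Fin m) (Fin k) ℝ) (x : EuclideanSpace ℝ (Fin m))
    (y : EuclideanSpace ℝ (Fin k)) :
    ⟪x, Matrix.toEuclideanLin M y⟫ = ⟪Matrix.toEuclideanLin Mᵀ x, y⟫ := by
  rw [inner_toE', real_inner_comm, inner_toE', Finset.sum_comm]
  refine Finset.sum_congr rfl fun i _ => Finset.sum_congr rfl fun j _ => ?_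
  simp [Matrix.transpose_apply]; ring

lemma toE_mul' {m k l : ℕ} (A : Matrix (Fin m) (Fin k) ℝ) (B : Matrix (Fin k) (Fin l) ℝ)
    (v : EuclideanSpace ℝ (Fin l)) :
    Matrix.toEuclideanLin (A * B) v = Matrix.toEuclideanLin A (Matrix.toEuclideanLin B v) := by
  simp [Matrix.toEuclideanLin_apply, Matrix.mulVec_mulVec]

lemma toE_one' {k : ℕ} (v : EuclideanSpace ℝ (Fin k)) :
    Matrix.toEuclideanLin (1 : Matrix (Fin k) (Fin k) ℝ) v = v := by
  simp [Matrix.toEuclideanLin_apply, Matrix.one_mulVec]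

lemma hasDerivAt_half_norm_sq' {k : ℕ} {f : ℝ → EuclideanSpace ℝ (Fin k)}
    {f' : EuclideanSpace ℝ (Fin k)} {t : ℝ} (hf : HasDerivAt f f' t) :
    HasDerivAt (fun τ => (1/2) * ‖f τ‖^2) ⟪f', f t⟫ t := by
  have h := (hf.inner ℝ hf).const_mul (1/2)
  simp only [← real_inner_self_eq_norm_sq]
  refine h.congr_deriv ?_
  rw [real_inner_comm (f t) f']; ring

lemma hasDerivAt_quad' {k : ℕ} {θf : ℝ → EuclideanSpace ℝ (Fin k)}
    {θ' : EuclideanSpace ℝ (Fin k)} {Mf : ℝ → Matrix (Fin k) (Fin k) ℝ}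
    {M' : Matrix (Fin k) (Fin k) ℝ} {t : ℝ}
    (hθ : HasDerivAt θf θ' t) (hM : ∀ i j, HasDerivAt (fun τ => Mf τ i j) (M' i j) t) :
    HasDerivAt (fun τ => ⟪θf τ, Matrix.toEuclideanLin (Mf τ) (θf τ)⟫)
      (⟪θ', Matrix.toEuclideanLin (Mf t) (θf t)⟫
        + ⟪θf t, Matrix.toEuclideanLin M' (θf t)⟫
        + ⟪θf t, Matrix.toEuclideanLin (Mf t) θ'⟫) t := by
  have hc : ∀ i, HasDerivAt (fun τ => θf τ i) (θ' i) t :=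
    fun i => by exact (EuclideanSpace.proj (𝕜 := ℝ) i).hasFDerivAt.comp_hasDerivAt t hθ
  have h : HasDerivAt (fun τ => ∑ i, ∑ j, θf τ i * (Mf τ i j * θf τ j))
      (∑ i, ∑ j, (θ' i * (Mf t i j * θf t j)
        + θf t i * (M' i j * θf t j + Mf t i j * θ' j))) t := by
    refine HasDerivAt.fun_sum fun i _ => HasDerivAt.fun_sum fun j _ => ?_
    exact (hc i).mul ((hM i j).mul (hc j))
  simp only [inner_toE']
  convert h using 1
  simp only [mul_add, Finset.sum_add_distrib]
  ring

end LyapAux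

/-- Derivative bound on the candidate Lyapunov function
`V = ½‖e‖² + ½‖r‖² + ½‖r̃‖² + ½‖f̃‖² + ½ θ̃ᵀ Γ⁻¹ θ̃` along the closed-loop,
observer, adaptation-gain, and (projected) composite-adaptation dynamics. -/
theorem lyapunov_derivative_bound {n p : ℕ}
    (e r rtil ftil Δ fdot : ℝ → EuclideanSpace ℝ (Fin n))
    (θtil q : ℝ → EuclideanSpace ℝ (Fin p))
    (Γ : ℝ → Matrix (Fin p) (Fin p) ℝ)
    (Φ' : ℝ → Matrix (Fin n) (Fin p) ℝ)
    (β : ℝ → ℝ) (θstar : EuclideanSpace ℝ (Fin p))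
    (α₁ α₂ α₃ kr kf kθ : ℝ)
    (hΓpd : ∀ t, (Γ t).PosDef)
    (he : ∀ t ≥ (0:ℝ), HasDerivAt e (r t - α₁ • e t) t)
    (hr : ∀ t ≥ (0:ℝ), HasDerivAt r
      (Matrix.toEuclideanLin (Φ' t) (θtil t) + Δ t - e t - kr • r t) t)
    (hrtil : ∀ t ≥ (0:ℝ), HasDerivAt rtil (ftil t - α₂ • rtil t) t)
    (hftil : ∀ t ≥ (0:ℝ), HasDerivAt ftil (fdot t - kf • ftil t - rtil t) t)
    (hΓinv : ∀ t ≥ (0:ℝ), ∀ i j, HasDerivAt (fun τ => (Γ τ)⁻¹ i j)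
      ((-β t • (Γ t)⁻¹ + (Φ' t)ᵀ * Φ' t) i j) t)
    (hθtil : ∀ t ≥ (0:ℝ), HasDerivAt θtil (-(Matrix.toEuclideanLin (Γ t) (q t))) t)
    (hproj : ∀ t ≥ (0:ℝ),
      ⟪θtil t, -kθ • (θstar - θtil t)
          + Matrix.toEuclideanLin ((Φ' t)ᵀ)
              (r t + α₃ • (Matrix.toEuclideanLin (Φ' t) (θtil t) - ftil t + Δ t))⟫
        ≤ ⟪θtil t, q t⟫) :
    ∀ t ≥ (0:ℝ), ∀ V' : ℝ,
      HasDerivAt (fun τ =>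
        (1/2) * ‖e τ‖ ^ 2 + (1/2) * ‖r τ‖ ^ 2 + (1/2) * ‖rtil τ‖ ^ 2
          + (1/2) * ‖ftil τ‖ ^ 2
          + (1/2) * ⟪θtil τ, Matrix.toEuclideanLin ((Γ τ)⁻¹) (θtil τ)⟫) V' t →
      V' ≤ -α₁ * ‖e t‖ ^ 2 - kr * ‖r t‖ ^ 2 - α₂ * ‖rtil t‖ ^ 2 - kf * ‖ftil t‖ ^ 2
          - kθ * ‖θtil t‖ ^ 2
          - (β t / 2) * ⟪θtil t, Matrix.toEuclideanLin ((Γ t)⁻¹) (θtil t)⟫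
          + ⟪r t, Δ t⟫ + ⟪ftil t, fdot t⟫
          - (α₃ - 1/2) * ‖Matrix.toEuclideanLin (Φ' t) (θtil t)‖ ^ 2
          + α₃ * ⟪Matrix.toEuclideanLin (Φ' t) (θtil t), ftil t - Δ t⟫
          + kθ * ⟪θtil t, θstar⟫ := by
  intro t ht V' hV
  have hsym : (Γ t)ᵀ = Γ t := by simpa using (hΓpd t).1.eq
  have hdet : IsUnit (Γ t).det := isUnit_iff_ne_zero.mpr (hΓpd t).det_pos.ne'
  set θ := θtil t with hθdef
  set Ψ := Matrix.toEuclideanLin (Φ' t) θ with hΨdef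
  -- the five derivative pieces
  have hDe := hasDerivAt_half_norm_sq' (he t ht)
  have hDr := hasDerivAt_half_norm_sq' (hr t ht)
  have hDrt := hasDerivAt_half_norm_sq' (hrtil t ht)
  have hDft := hasDerivAt_half_norm_sq' (hftil t ht)
  have hQ := (hasDerivAt_quad' (hθtil t ht) (hΓinv t ht)).const_mul (1/2 : ℝ)
  have hVtot := (((hDe.add hDr).add hDrt).add hDft).add hQ
  have hEq : V' = ⟪r t - α₁ • e t, e t⟫
      + ⟪Matrix.toEuclideanLin (Φ' t) θ + Δ t - e t - kr • r t, r t⟫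
      + ⟪ftil t - α₂ • rtil t, rtil t⟫
      + ⟪fdot t - kf • ftil t - rtil t, ftil t⟫
      + (1/2) * (⟪-(Matrix.toEuclideanLin (Γ t) (q t)),
            Matrix.toEuclideanLin ((Γ t)⁻¹) θ⟫
          + ⟪θ, Matrix.toEuclideanLin (-β t • (Γ t)⁻¹ + (Φ' t)ᵀ * Φ' t) θ⟫
          + ⟪θ, Matrix.toEuclideanLin ((Γ t)⁻¹) (-(Matrix.toEuclideanLin (Γ t) (q t)))⟫) :=
    hV.unique hVtot
  -- simplify the three quadratic-form pieces
  have hS1 : ⟪-(Matrix.toEuclideanLin (Γ t) (q t)), Matrix.toEuclideanLin ((Γ t)⁻¹) θ⟫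
      = -⟪θ, q t⟫ := by
    rw [inner_neg_left]
    have h1 : ⟪Matrix.toEuclideanLin (Γ t) (q t), Matrix.toEuclideanLin ((Γ t)⁻¹) θ⟫
        = ⟪q t, Matrix.toEuclideanLin ((Γ t)ᵀ) (Matrix.toEuclideanLin ((Γ t)⁻¹) θ)⟫ := by
      conv_rhs => rw [transpose_inner' ((Γ t)ᵀ), Matrix.transpose_transpose]
    rw [h1, ← toE_mul', hsym, Matrix.mul_nonsing_inv _ hdet, toE_one', real_inner_comm]
  have hS3 : ⟪θ, Matrix.toEuclideanLin ((Γ t)⁻¹)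
      (-(Matrix.toEuclideanLin (Γ t) (q t)))⟫ = -⟪θ, q t⟫ := by
    rw [map_neg, inner_neg_right, ← toE_mul', Matrix.nonsing_inv_mul _ hdet, toE_one']
  have hS2 : ⟪θ, Matrix.toEuclideanLin (-β t • (Γ t)⁻¹ + (Φ' t)ᵀ * Φ' t) θ⟫
      = -β t * ⟪θ, Matrix.toEuclideanLin ((Γ t)⁻¹) θ⟫ + ‖Ψ‖^2 := by
    rw [map_add, LinearMap.add_apply, inner_add_right, toE_mul',
      transpose_inner' ((Φ' t)ᵀ), Matrix.transpose_transpose, ← hΨdef,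
      real_inner_self_eq_norm_sq, _root_.map_smul, LinearMap.smul_apply,
      real_inner_smul_right]
  -- the projection inequality, expanded
  have hp : -kθ * ⟪θ, θstar⟫ + kθ * ‖θ‖^2 + ⟪Ψ, r t⟫ + α₃ * ‖Ψ‖^2 - α₃ * ⟪Ψ, ftil t⟫
      + α₃ * ⟪Ψ, Δ t⟫ ≤ ⟪θ, q t⟫ := by
    have h := hproj t ht
    rw [inner_add_right, real_inner_smul_right, inner_sub_right,
      transpose_inner' ((Φ' t)ᵀ), Matrix.transpose_transpose, ← hθdef, ← hΨdef,
      inner_add_right, real_inner_smul_right, inner_add_right, inner_sub_right,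
      real_inner_self_eq_norm_sq, real_inner_self_eq_norm_sq] at h
    linarith [h]
  rw [hEq, hS1, hS2, hS3]
  simp only [inner_sub_left, inner_add_left, real_inner_smul_left, inner_sub_right, ← hΨdef,
    real_inner_self_eq_norm_sq]
  linarith [hp, real_inner_comm (r t) (Δ t), real_inner_comm (ftil t) (fdot t),
    real_inner_comm (r t) Ψ, real_inner_comm Ψ (ftil t), real_inner_comm Ψ (Δ t),
    real_inner_comm (e t) (r t), real_inner_comm (ftil t) (rtil t)]
end

section
/- Let χ, λ₁, λ₂, λ₃, c > 0 with (λ₁/λ₂) χ² − c/λ₃ ≥ 0. Let z : [0,∞) → ℝ^N be continuous and V : [0,∞) → ℝ be differentiable such that for all t ≥ 0: λ₁‖z(t)‖² ≤ V(t) ≤ λ₂‖z(t)‖², and whenever ‖z(t)‖ ≤ χ one has V′(t) ≤ −(λ₃/λ₂) V(t) + c. If ‖z(0)‖ ≤ √( (λ₁/λ₂) χ² − c/λ₃ ), then for all t ≥ 0: ‖z(t)‖ ≤ √( (λ₂/λ₁) ‖z(0)‖² e^{−(λ₃/λ₂) t} + (λ₂ c/(λ₁ λ₃)) (1 − e^{−(λ₃/λ₂)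 t}) ) ≤ √( (λ₂/λ₁) ‖z(0)‖² + λ₂ c/(λ₁ λ₃) ) ≤ χ; in particular ‖z(t)‖ ≤ χ for all t ≥ 0 and z is uniformly ultimately bounded with ultimate bound √(λ₂ c/(λ₁ λ₃)). -/
set_option maxHeartbeats 1600000 in
/-- Abstract form of the paper's main theorem: if
`λ₁‖z‖² ≤ V ≤ λ₂‖z‖²` everywhere, the decay inequality `V′ ≤ −(λ₃/λ₂)V + c`
holds whenever `‖z(t)‖ ≤ χ`, and `‖z(0)‖ ≤ √((λ₁/λ₂)χ² − c/λ₃)`, then `z` stays in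
the compact set `{‖ζ‖ ≤ χ}` and satisfies the uniform ultimate bound. -/
theorem main_uub_theorem {N : ℕ}
    (χ lam₁ lam₂ lam₃ c : ℝ)
    (hχ : 0 < χ) (hlam₁ : 0 < lam₁) (hlam₂ : 0 < lam₂) (hlam₃ : 0 < lam₃) (hc : 0 < c)
    (hS : 0 ≤ (lam₁ / lam₂) * χ ^ 2 - c / lam₃)
    (z : ℝ → EuclideanSpace ℝ (Fin N)) (V V' : ℝ → ℝ)
    (hzcont : Continuous z)
    (hVderiv : ∀ t ≥ (0:ℝ), HasDerivAt V (V' t) t)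
    (hsandwich : ∀ t ≥ (0:ℝ), lam₁ * ‖z t‖ ^ 2 ≤ V t ∧ V t ≤ lam₂ * ‖z t‖ ^ 2)
    (hdecay : ∀ t ≥ (0:ℝ), ‖z t‖ ≤ χ → V' t ≤ -(lam₃ / lam₂) * V t + c)
    (hz0 : ‖z 0‖ ≤ Real.sqrt ((lam₁ / lam₂) * χ ^ 2 - c / lam₃)) :
    ∀ t ≥ (0:ℝ),
      ‖z t‖ ≤ Real.sqrt ((lam₂ / lam₁) * ‖z 0‖ ^ 2 * Real.exp (-(lam₃ / lam₂) * t)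
          + (lam₂ * c / (lam₁ * lam₃)) * (1 - Real.exp (-(lam₃ / lam₂) * t))) ∧
      Real.sqrt ((lam₂ / lam₁) * ‖z 0‖ ^ 2 * Real.exp (-(lam₃ / lam₂) * t)
          + (lam₂ * c / (lam₁ * lam₃)) * (1 - Real.exp (-(lam₃ / lam₂) * t)))
        ≤ Real.sqrt ((lam₂ / lam₁) * ‖z 0‖ ^ 2 + lam₂ * c / (lam₁ * lam₃)) ∧
      Real.sqrt ((lam₂ / lam₁) * ‖z 0‖ ^ 2 + lam₂ * c / (lam₁ * lam₃)) ≤ χ ∧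
      ‖z t‖ ≤ χ ∧
      ∀ ε > Real.sqrt (lam₂ * c / (lam₁ * lam₃)), ∃ T ≥ (0:ℝ), ∀ s ≥ T, ‖z s‖ ≤ ε := by
  have hα : (0:ℝ) < lam₃ / lam₂ := div_pos hlam₃ hlam₂
  set α : ℝ := lam₃ / lam₂ with hαdef
  set κ : ℝ := c * lam₂ / lam₃ with hκdef
  have hκpos : 0 < κ := by positivity
  have hακ : α * κ = c := by rw [hαdef, hκdef]; field_simp
  -- squared initial bound
  have hz0sq : ‖z 0‖ ^ 2 ≤ (lam₁ / lam₂) * χ ^ 2 - c / lam₃ := by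
    have h := pow_le_pow_left₀ (norm_nonneg (z 0)) hz0 2
    rwa [Real.sq_sqrt hS] at h
  set A : ℝ := lam₂ / lam₁ * ‖z 0‖ ^ 2 with hAdef
  set K : ℝ := lam₂ * c / (lam₁ * lam₃) with hKdef
  have hAnn : 0 ≤ A := by positivity
  have hKpos : 0 < K := by positivity
  have hAK : A + K ≤ χ ^ 2 := by
    have h := mul_le_mul_of_nonneg_left hz0sq (div_pos hlam₂ hlam₁).le
    have e1 : lam₂ / lam₁ * ((lam₁ / lam₂) * χ ^ 2 - c / lam₃) = χ ^ 2 - K := by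
      rw [hKdef]; field_simp
    rw [e1] at h
    linarith
  have hKχ : K ≤ χ ^ 2 := by linarith
  -- Gronwall-type estimate on an interval where the trajectory stays in the ball
  have gron : ∀ T ≥ (0:ℝ), (∀ s ∈ Set.Icc (0:ℝ) T, ‖z s‖ ≤ χ) →
      V T ≤ V 0 * Real.exp (-α * T) + κ * (1 - Real.exp (-α * T)) := by
    intro T hT hbound
    have hderiv : ∀ s ∈ Set.Icc (0:ℝ) T,
        HasDerivAt (fun u => (V u - κ) * Real.exp (α * u))
          ((V' s + α * (V s - κ)) * Real.exp (α * s)) s := by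
      intro s hs
      have h1 : HasDerivAt (fun u => V u - κ) (V' s) s := (hVderiv s hs.1).sub_const κ
      have h2 : HasDerivAt (fun u : ℝ => Real.exp (α * u)) (Real.exp (α * s) * α) s := by
        have h3 : HasDerivAt (fun u : ℝ => α * u) α s := by
          simpa using (hasDerivAt_id s).const_mul α
        exact h3.exp
      have : HasDerivAt (fun u => (V u - κ) * Real.exp (α * u))
          (V' s * Real.exp (α * s) + (V s - κ) * (Real.exp (α * s) * α)) s := h1.mul h2
      convert this using 1
      ring
    have hanti : AntitoneOn (fun u => (V u - κ) * Real.exp (α * u)) (Set.Icc 0 T) := by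
      apply antitoneOn_of_deriv_nonpos (convex_Icc 0 T)
      · exact fun s hs => (hderiv s hs).continuousAt.continuousWithinAt
      · intro s hs
        rw [interior_Icc] at hs
        exact (hderiv s (Set.Ioo_subset_Icc_self hs)).differentiableAt.differentiableWithinAt
      · intro s hs
        rw [interior_Icc] at hs
        rw [(hderiv s (Set.Ioo_subset_Icc_self hs)).deriv]
        have hV'le := hdecay s hs.1.le (hbound s (Set.Ioo_subset_Icc_self hs))
        have hnp : V' s + α * (V s - κ) ≤ 0 := by nlinarith
        exact mul_nonpos_of_nonpos_of_nonneg hnp (Real.exp_pos _).le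
    have key : (V T - κ) * Real.exp (α * T) ≤ (V 0 - κ) * Real.exp (α * 0) :=
      hanti (Set.left_mem_Icc.2 hT) (Set.right_mem_Icc.2 hT) hT
    have h2 : V T - κ ≤ (V 0 - κ) * Real.exp (-α * T) := by
      have h3 := mul_le_mul_of_nonneg_right key (Real.exp_pos (-α * T)).le
      have h4 : Real.exp (α * T) * Real.exp (-α * T) = 1 := by
        rw [← Real.exp_add]; ring_nf; exact Real.exp_zero
      calc V T - κ = (V T - κ) * (Real.exp (α * T) * Real.exp (-α * T)) := by rw [h4]; ring
        _ = (V T - κ) * Real.exp (α * T) * Real.exp (-α * T) := by ring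
        _ ≤ (V 0 - κ) * Real.exp (α * 0) * Real.exp (-α * T) := h3
        _ = (V 0 - κ) * Real.exp (-α * T) := by norm_num
    nlinarith [h2]
  -- squared bound lemma
  have sqbound : ∀ T ≥ (0:ℝ), (∀ s ∈ Set.Icc (0:ℝ) T, ‖z s‖ ≤ χ) →
      ‖z T‖ ^ 2 ≤ A * Real.exp (-α * T) + K * (1 - Real.exp (-α * T)) := by
    intro T hT hbound
    have hg := gron T hT hbound
    obtain ⟨h1, _⟩ := hsandwich T hT
    obtain ⟨_, h2⟩ := hsandwich 0 le_rfl
    have he : (0:ℝ) < Real.exp (-α * T) := Real.exp_pos _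
    have he1 : Real.exp (-α * T) ≤ 1 := Real.exp_le_one_iff.2 (by
      have := mul_nonneg hα.le hT; linarith)
    have hV : lam₁ * ‖z T‖ ^ 2 ≤ lam₂ * ‖z 0‖ ^ 2 * Real.exp (-α * T)
        + κ * (1 - Real.exp (-α * T)) := by nlinarith
    have expand : lam₁ * (A * Real.exp (-α * T) + K * (1 - Real.exp (-α * T)))
        = lam₂ * ‖z 0‖ ^ 2 * Real.exp (-α * T) + κ * (1 - Real.exp (-α * T)) := by
      rw [hAdef, hKdef, hκdef]
      field_simp [hlam₁.ne', hlam₂.ne', hlam₃.ne']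
    have h5 : lam₁ * (‖z T‖ ^ 2) ≤ lam₁ * (A * Real.exp (-α * T) + K * (1 - Real.exp (-α * T))) := by
      rw [expand]; exact hV
    exact le_of_mul_le_mul_left h5 hlam₁
  -- strict bound on the Gronwall envelope
  have Blt : ∀ t ≥ (0:ℝ), A * Real.exp (-α * t) + K * (1 - Real.exp (-α * t)) < χ ^ 2 := by
    intro t ht
    have he : (0:ℝ) < Real.exp (-α * t) := Real.exp_pos _
    have he1 : Real.exp (-α * t) ≤ 1 := Real.exp_le_one_iff.2 (by
      have := mul_nonneg hα.le ht; linarith)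
    nlinarith [mul_nonneg (sub_nonneg.2 he1) (sub_nonneg.2 hKχ), mul_pos he hKpos,
      mul_nonneg he.le (by linarith : (0:ℝ) ≤ χ ^ 2 - K - A)]
  -- initial point strictly inside the ball
  have hz0lt : ‖z 0‖ < χ := by
    rcases eq_or_ne (‖z 0‖) 0 with h | h
    · rw [h]; exact hχ
    · have hpos : 0 < ‖z 0‖ ^ 2 := by
        have := (norm_nonneg (z 0)).lt_of_ne' h
        positivity
      obtain ⟨h1, h2⟩ := hsandwich 0 le_rfl
      have hl : lam₁ ≤ lam₂ := by nlinarith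
      have hratio : lam₁ / lam₂ ≤ 1 := by rw [div_le_one hlam₂]; exact hl
      have hcl : 0 < c / lam₃ := by positivity
      have hsq : ‖z 0‖ ^ 2 < χ ^ 2 := by nlinarith [hz0sq, sq_nonneg χ]
      nlinarith [norm_nonneg (z 0)]
  -- invariance: the trajectory stays in the ball
  have inv : ∀ t ≥ (0:ℝ), ‖z t‖ ≤ χ := by
    by_contra hcon
    push_neg at hcon
    obtain ⟨t₀, ht₀, hgt⟩ := hcon
    set E : Set ℝ := {t | 0 ≤ t ∧ χ ≤ ‖z t‖} with hEdef
    have hEne : E.Nonempty := ⟨t₀, ht₀, hgt.le⟩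
    have hEclosed : IsClosed E := by
      have : E = {t : ℝ | 0 ≤ t} ∩ {t : ℝ | χ ≤ ‖z t‖} := rfl
      rw [this]
      exact (isClosed_le continuous_const continuous_id).inter
        (isClosed_le continuous_const hzcont.norm)
    have hbdd : BddBelow E := ⟨0, fun x hx => hx.1⟩
    set T := sInf E with hTdef
    have hTmem : T ∈ E := hEclosed.csInf_mem hEne hbdd
    have hT0 : 0 ≤ T := hTmem.1
    have hTpos : 0 < T := by
      rcases hT0.lt_or_eq with h | h
      · exact h
      · exact absurd hTmem.2 (not_le.2 (by rw [← h]; exact hz0lt))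
    have hlt : ∀ s, 0 ≤ s → s < T → ‖z s‖ < χ := by
      intro s h0 hsT
      by_contra hge
      push_neg at hge
      exact absurd (csInf_le hbdd ⟨h0, hge⟩) (not_le.2 hsT)
    have hle : ∀ s ∈ Set.Icc (0:ℝ) T, ‖z s‖ ≤ χ := by
      rintro s ⟨hs0, hsT⟩
      rcases hsT.lt_or_eq with h | h
      · exact (hlt s hs0 h).le
      · rw [h]
        have htend : Filter.Tendsto (fun u => ‖z u‖) (nhdsWithin T (Set.Iio T)) (nhds ‖z T‖) :=
          (hzcont.norm.continuousAt).tendsto.mono_left nhdsWithin_le_nhds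
        refine le_of_tendsto htend ?_
        filter_upwards [Ioo_mem_nhdsLT_of_mem (Set.mem_Ioc.2 ⟨hTpos, le_rfl⟩)] with u hu
        exact (hlt u hu.1.le hu.2).le
    have hb := sqbound T hT0 hle
    have hBT := Blt T hT0
    have hχT : χ ≤ ‖z T‖ := hTmem.2
    nlinarith [hb, hBT, hχT, norm_nonneg (z T)]
  -- main squared bound for all time
  have main : ∀ t ≥ (0:ℝ), ‖z t‖ ^ 2 ≤ A * Real.exp (-α * t) + K * (1 - Real.exp (-α * t)) :=
    fun t ht => sqbound t ht (fun s hs => inv s hs.1)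
  -- conclusions
  intro t ht
  have he : (0:ℝ) < Real.exp (-α * t) := Real.exp_pos _
  have he1 : Real.exp (-α * t) ≤ 1 := Real.exp_le_one_iff.2 (by
    have := mul_nonneg hα.le ht; linarith)
  have hBnn : 0 ≤ A * Real.exp (-α * t) + K * (1 - Real.exp (-α * t)) := by nlinarith
  refine ⟨?_, ?_, ?_, inv t ht, ?_⟩
  · -- first bound
    have := Real.sqrt_le_sqrt (main t ht)
    rwa [Real.sqrt_sq (norm_nonneg (z t))] at this
  · -- monotone bound
    apply Real.sqrt_le_sqrt
    nlinarith
  · -- bound by χ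
    have := Real.sqrt_le_sqrt hAK
    rwa [Real.sqrt_sq hχ.le] at this
  · -- uniform ultimate boundedness
    intro ε hε
    have hεpos : 0 < ε := lt_of_le_of_lt (Real.sqrt_nonneg _) hε
    have hKlt : K < ε ^ 2 := by
      nlinarith [Real.sq_sqrt hKpos.le, Real.sqrt_nonneg K, hε]
    set δ : ℝ := ε ^ 2 - K with hδdef
    have hδpos : 0 < δ := by rw [hδdef]; linarith
    have hA1 : (0:ℝ) < A + 1 := by linarith
    refine ⟨max 0 ((lam₂ / lam₃) * Real.log ((A + 1) / δ)), le_max_left _ _, ?_⟩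
    intro s hs
    have hs0 : (0:ℝ) ≤ s := le_trans (le_max_left _ _) hs
    have hexp : Real.exp (-α * s) ≤ δ / (A + 1) := by
      have hlog : (lam₂ / lam₃) * Real.log ((A + 1) / δ) ≤ s :=
        le_trans (le_max_right _ _) hs
      have h1 : Real.log ((A + 1) / δ) ≤ α * s := by
        have := mul_le_mul_of_nonneg_left hlog hα.le
        calc Real.log ((A + 1) / δ)
            = α * ((lam₂ / lam₃) * Real.log ((A + 1) / δ)) := by
              rw [hαdef]; field_simp
          _ ≤ α * s := this
      have h2 : -α * s ≤ Real.log (δ / (A + 1)) := by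
        have : Real.log ((A + 1) / δ) = - Real.log (δ / (A + 1)) := by
          rw [← Real.log_inv, inv_div]
        rw [this] at h1
        linarith
      calc Real.exp (-α * s) ≤ Real.exp (Real.log (δ / (A + 1))) := Real.exp_le_exp.2 h2
        _ = δ / (A + 1) := Real.exp_log (div_pos hδpos hA1)
    have hes : (0:ℝ) < Real.exp (-α * s) := Real.exp_pos _
    have hes1 : Real.exp (-α * s) ≤ 1 := Real.exp_le_one_iff.2 (by
      have := mul_nonneg hα.le hs0; linarith)
    have hms := main s hs0
    have hAe : A * Real.exp (-α * s) ≤ δ := by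
      have h3 : A * Real.exp (-α * s) ≤ A * (δ / (A + 1)) :=
        mul_le_mul_of_nonneg_left hexp hAnn
      have h4 : A * (δ / (A + 1)) ≤ δ := by
        have heq : A * (δ / (A + 1)) = A * δ / (A + 1) := by ring
        rw [heq, div_le_iff₀ hA1]
        nlinarith
      linarith
    have hsq : ‖z s‖ ^ 2 ≤ ε ^ 2 := by nlinarith
    nlinarith [norm_nonneg (z s), sq_nonneg (‖z s‖ - ε), sq_nonneg (‖z s‖ + ε)]
end

section
/- Let P : [0,∞) → ℝ^{p×p} be continuously differentiable with P(t) symmetric for all t, let W : [0,∞) → ℝ^{q×p} be continuous, and let β₀, κ₀ > 0. Suppose P(0) is positive definite with λ_min(P(0)) > 1/κ₀, and for all t at which P(t) is positive definite, Ṗ(t) = −β(t) P(t) + W(t)ᵀ W(t), where β(t) = β₀ ( 1 − 1/(κ₀ λ_min(P(t))) ). Then P(t) is positive definite and λ_min(P(t)) > 1/κ₀ for all t ≥ 0; equivalently, Γ(t) := P(t)⁻¹ remains positive definite with λ_max(Γ(t)) < κ₀ for all t ≥ 0, so that the forgetting factor β(t) = β₀(1 − λ_max(Γ(t))/κ₀)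 remains nonnegative. -/
open Matrix

section Aux

variable {p : ℕ}

/-- Spectral decomposition of a real quadratic form. -/
lemma aux_quad_decomp {A : Matrix (Fin p) (Fin p) ℝ} (hA : A.IsHermitian) (x : Fin p → ℝ) :
    ∃ y : Fin p → ℝ, x ⬝ᵥ A *ᵥ x = ∑ i, hA.eigenvalues i * y i ^ 2 ∧
      x ⬝ᵥ x = ∑ i, y i ^ 2 := by
  classical
  set U : Matrix (Fin p) (Fin p) ℝ := (hA.eigenvectorUnitary : Matrix (Fin p) (Fin p) ℝ) with hU
  have hU1 : U * star U = 1 := (Unitary.mem_iff.mp hA.eigenvectorUnitary.2).2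
  have hyy : star U *ᵥ x = x ᵥ* U := by
    have : star U = Uᵀ := by
      simp [star, conjTranspose]
    rw [this, mulVec_transpose]
  refine ⟨star U *ᵥ x, ?_, ?_⟩
  · conv_lhs => rw [hA.spectral_theorem, Unitary.conjStarAlgAut_apply]
    rw [← mulVec_mulVec, ← mulVec_mulVec, dotProduct_mulVec x, ← hyy]
    simp only [dotProduct, mulVec_diagonal]
    refine Finset.sum_congr rfl fun i _ => ?_
    simp [RCLike.ofReal_real_eq_id]
    ring
  · have : x ⬝ᵥ x = x ⬝ᵥ ((U * star U) *ᵥ x) := by rw [hU1, one_mulVec]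
    rw [this, ← mulVec_mulVec, dotProduct_mulVec x, ← hyy]
    simp only [dotProduct]
    refine Finset.sum_congr rfl fun i _ => ?_
    ring

/-- Rayleigh lower bound: `λ_min · ‖x‖² ≤ xᵀ A x`. -/
lemma aux_lam_min_le {A : Matrix (Fin p) (Fin p) ℝ} (hA : A.IsHermitian) (x : Fin p → ℝ) :
    (⨅ i, hA.eigenvalues i) * (x ⬝ᵥ x) ≤ x ⬝ᵥ A *ᵥ x := by
  obtain ⟨y, h1, h2⟩ := aux_quad_decomp hA x
  rcases isEmpty_or_nonempty (Fin p) with hemp | hne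
  · simp [h1, h2]
  · rw [h1, h2, Finset.mul_sum]
    refine Finset.sum_le_sum fun i _ => ?_
    exact mul_le_mul_of_nonneg_right (ciInf_le (Finite.bddBelow_range _) i) (sq_nonneg _)

lemma aux_unit_eigvec {A : Matrix (Fin p) (Fin p) ℝ} (hA : A.IsHermitian) (i : Fin p) :
    (⇑(hA.eigenvectorBasis i) : Fin p → ℝ) ⬝ᵥ (⇑(hA.eigenvectorBasis i) : Fin p → ℝ) = 1 := by
  have hn : ‖hA.eigenvectorBasis i‖ = 1 := hA.eigenvectorBasis.orthonormal.1 i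
  have h2 : (⇑(hA.eigenvectorBasis i) : Fin p → ℝ) ⬝ᵥ (⇑(hA.eigenvectorBasis i) : Fin p → ℝ)
      = ‖hA.eigenvectorBasis i‖ ^ 2 := by
    rw [EuclideanSpace.norm_eq, Real.sq_sqrt (by positivity)]
    simp [dotProduct, sq, Real.norm_eq_abs, abs_mul_abs_self]
  rw [h2, hn, one_pow]

/-- The minimum eigenvalue is attained by a unit vector. -/
lemma aux_exists_eigvec_min (hp : 0 < p) {A : Matrix (Fin p) (Fin p) ℝ} (hA : A.IsHermitian) :
    ∃ x : Fin p → ℝ, x ⬝ᵥ x = 1 ∧ x ⬝ᵥ A *ᵥ x = ⨅ i, hA.eigenvalues i := by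
  have hne : Nonempty (Fin p) := ⟨⟨0, hp⟩⟩
  obtain ⟨i₀, -, hmin⟩ := Finset.exists_min_image Finset.univ hA.eigenvalues
    ⟨Classical.arbitrary _, Finset.mem_univ _⟩
  have hinf : ⨅ i, hA.eigenvalues i = hA.eigenvalues i₀ :=
    le_antisymm (ciInf_le (Finite.bddBelow_range _) i₀)
      (le_ciInf fun i => hmin i (Finset.mem_univ i))
  refine ⟨⇑(hA.eigenvectorBasis i₀), aux_unit_eigvec hA i₀, ?_⟩
  rw [hA.mulVec_eigenvectorBasis i₀, dotProduct_smul, smul_eq_mul, aux_unit_eigvec hA i₀,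
    mul_one, hinf]

lemma aux_posdef {A : Matrix (Fin p) (Fin p) ℝ} (hA : A.IsHermitian)
    (h : 0 < ⨅ i, hA.eigenvalues i) : A.PosDef := by
  refine posDef_iff_dotProduct_mulVec.mpr ⟨hA, fun x hx => ?_⟩
  have h1 := aux_lam_min_le hA x
  have hxx : 0 < x ⬝ᵥ x := by
    have hnn : 0 ≤ x ⬝ᵥ x := Finset.sum_nonneg fun i _ => mul_self_nonneg _
    rcases hnn.lt_or_eq with hlt | heq
    · exact hlt
    · exfalso; apply hx; funext i
      have : x i * x i = 0 := by
        have := Finset.sum_eq_zero_iff_of_nonneg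
          (fun j (_ : j ∈ Finset.univ) => mul_self_nonneg (x j)) |>.mp heq.symm i (Finset.mem_univ i)
        exact this
      exact mul_self_eq_zero.mp this
  calc (0:ℝ) < (⨅ i, hA.eigenvalues i) * (x ⬝ᵥ x) := mul_pos h hxx
  _ ≤ x ⬝ᵥ A *ᵥ x := h1
  _ = star x ⬝ᵥ A *ᵥ x := by rw [star_trivial]

lemma aux_sup_inv {κ₀ : ℝ} (hκ₀ : 0 < κ₀) {A : Matrix (Fin p) (Fin p) ℝ}
    (hA : A.IsHermitian) (hPD : A.PosDef)
    (h : 1 / κ₀ < ⨅ i, hA.eigenvalues i) : (⨆ i, hA.inv.eigenvalues i) < κ₀ := by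
  rcases isEmpty_or_nonempty (Fin p) with hemp | hne
  · rw [Real.iSup_of_isEmpty]; exact hκ₀
  · have hm0 : 0 < ⨅ i, hA.eigenvalues i := lt_trans (by positivity) h
    have key : ∀ i, hA.inv.eigenvalues i < κ₀ := by
      intro i
      have hμpos : 0 < hA.inv.eigenvalues i := hPD.inv.eigenvalues_pos i
      set μ := hA.inv.eigenvalues i with hμ
      set v : Fin p → ℝ := ⇑(hA.inv.eigenvectorBasis i) with hv
      have hveq : A⁻¹ *ᵥ v = μ • v := hA.inv.mulVec_eigenvectorBasis i
      have hv1 : v ⬝ᵥ v = 1 := aux_unit_eigvec hA.inv i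
      have hdet : IsUnit A.det := isUnit_iff_ne_zero.2 (ne_of_gt hPD.det_pos)
      have hAv : A *ᵥ v = μ⁻¹ • v := by
        have h1 : A *ᵥ (A⁻¹ *ᵥ v) = v := by
          rw [mulVec_mulVec, Matrix.mul_nonsing_inv _ hdet, one_mulVec]
        rw [hveq, mulVec_smul] at h1
        have h2 : μ⁻¹ • (μ • (A *ᵥ v)) = μ⁻¹ • v := by rw [h1]
        rw [smul_smul, inv_mul_cancel₀ hμpos.ne', one_smul] at h2
        exact h2
      have h2 := aux_lam_min_le hA v
      rw [hAv, dotProduct_smul, smul_eq_mul, hv1] at h2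
      simp only [mul_one] at h2
      have h3 : 1 / κ₀ < μ⁻¹ := lt_of_lt_of_le h h2
      rw [one_div] at h3
      nlinarith [mul_lt_mul_of_pos_left h3 (mul_pos hμpos hκ₀),
        mul_inv_cancel₀ hμpos.ne', mul_inv_cancel₀ hκ₀.ne']
    obtain ⟨i₀, -, hmax⟩ := Finset.exists_max_image Finset.univ hA.inv.eigenvalues
      ⟨Classical.arbitrary _, Finset.mem_univ _⟩
    have hsup : ⨆ i, hA.inv.eigenvalues i = hA.inv.eigenvalues i₀ :=
      le_antisymm (ciSup_le fun i => hmax i (Finset.mem_univ i))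
        (le_ciSup (Finite.bddAbove_range _) i₀)
    rw [hsup]; exact key i₀

/-- Perturbation bound for the minimum eigenvalue. -/
lemma aux_lipschitz (hp : 0 < p) {A B : Matrix (Fin p) (Fin p) ℝ}
    (hA : A.IsHermitian) (hB : B.IsHermitian) :
    (⨅ i, hB.eigenvalues i) ≤ (⨅ i, hA.eigenvalues i) + ∑ i, ∑ j, |B i j - A i j| := by
  obtain ⟨x, hx1, hxA⟩ := aux_exists_eigvec_min hp hA
  have h1 : (⨅ i, hB.eigenvalues i) ≤ x ⬝ᵥ B *ᵥ x := by
    have := aux_lam_min_le hB x; rwa [hx1, mul_one] at this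
  have habs : ∀ i, |x i| ≤ 1 := by
    intro i
    refine abs_le_one_iff_mul_self_le_one.2 ?_
    rw [← hx1]
    exact Finset.single_le_sum (fun j _ => mul_self_nonneg (x j)) (Finset.mem_univ i)
  have hsplit : ∀ (M : Matrix (Fin p) (Fin p) ℝ), x ⬝ᵥ M *ᵥ x = ∑ i, ∑ j, x i * (M i j * x j) :=
    fun M => by simp [dotProduct, mulVec, Finset.mul_sum]
  have h2 : x ⬝ᵥ B *ᵥ x - x ⬝ᵥ A *ᵥ x ≤ ∑ i, ∑ j, |B i j - A i j| := by
    rw [hsplit, hsplit, ← Finset.sum_sub_distrib]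
    refine Finset.sum_le_sum fun i _ => ?_
    rw [← Finset.sum_sub_distrib]
    refine Finset.sum_le_sum fun j _ => ?_
    have : x i * (B i j * x j) - x i * (A i j * x j) = x i * ((B i j - A i j) * x j) := by ring
    rw [this]
    calc x i * ((B i j - A i j) * x j) ≤ |x i * ((B i j - A i j) * x j)| := le_abs_self _
    _ = |x i| * (|B i j - A i j| * |x j|) := by rw [abs_mul, abs_mul]
    _ ≤ 1 * (|B i j - A i j| * 1) := by
        refine mul_le_mul (habs i) ?_ (by positivity) zero_le_one
        exact mul_le_mul_of_nonneg_left (habs j) (abs_nonneg _)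
    _ = |B i j - A i j| := by ring
  linarith [h1, h2, hxA.ge, hxA.le]

end Aux

/-- The inverse `P = Γ⁻¹` of the least-squares adaptation gain,
evolving (while positive definite) by `Ṗ = −β P + Wᵀ W` with bounded-gain forgetting
factor `β(t) = β₀ (1 − 1/(κ₀ λ_min(P(t))))`, remains positive definite with
`λ_min(P(t)) > 1/κ₀` for all `t ≥ 0`; equivalently `Γ(t) = P(t)⁻¹` remains positive
definite with `λ_max(Γ(t)) < κ₀`, so `β(t) = β₀ (1 − λ_max(Γ(t))/κ₀) ≥ 0`. -/
theorem least_squares_gain_bounded {p q : ℕ}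
    (P P' : ℝ → Matrix (Fin p) (Fin p) ℝ) (W : ℝ → Matrix (Fin q) (Fin p) ℝ)
    (β₀ κ₀ : ℝ) (hβ₀ : 0 < β₀) (hκ₀ : 0 < κ₀)
    (hsym : ∀ t, (P t).IsHermitian)
    (hP' : ∀ t ≥ (0:ℝ), ∀ i j, HasDerivAt (fun τ => P τ i j) (P' t i j) t)
    (hP'cont : ∀ i j, ContinuousOn (fun t => P' t i j) (Set.Ici (0:ℝ)))
    (hW : ∀ i j, ContinuousOn (fun t => W t i j) (Set.Ici (0:ℝ)))
    (hRiccati : ∀ t ≥ (0:ℝ), (P t).PosDef →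
      P' t = (-(β₀ * (1 - 1 / (κ₀ * ⨅ i, (hsym t).eigenvalues i)))) • P t
        + (W t)ᵀ * W t)
    (hP0 : (P 0).PosDef)
    (hlam0 : 1 / κ₀ < ⨅ i, (hsym 0).eigenvalues i) :
    ∀ t ≥ (0:ℝ),
      (P t).PosDef ∧ 1 / κ₀ < (⨅ i, (hsym t).eigenvalues i) ∧
      ((P t)⁻¹).PosDef ∧ (⨆ i, ((hsym t).inv).eigenvalues i) < κ₀ ∧
      0 ≤ β₀ * (1 - (⨆ i, ((hsym t).inv).eigenvalues i) / κ₀) := by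
  rcases Nat.eq_zero_or_pos p with hp0 | hp
  · exfalso
    subst hp0
    have h0 : (⨅ i : Fin 0, (hsym 0).eigenvalues i) = 0 := Real.iInf_of_isEmpty _
    rw [h0] at hlam0
    exact absurd hlam0 (not_lt.2 (le_of_lt (one_div_pos.2 hκ₀)))
  have key : ∀ t ≥ (0:ℝ), 1 / κ₀ < ⨅ i, (hsym t).eigenvalues i := by
    set m : ℝ → ℝ := fun t => ⨅ i, (hsym t).eigenvalues i with hm
    show ∀ t ≥ (0:ℝ), 1 / κ₀ < m t
    by_contra hcon
    push_neg at hcon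
    obtain ⟨t1, ht1, ht1'⟩ := hcon
    -- continuity of the entries and of m
    have hPc : ∀ i j, ContinuousOn (fun τ => P τ i j) (Set.Ici (0:ℝ)) :=
      fun i j t ht => ((hP' t ht i j).continuousAt).continuousWithinAt
    have hmc : ContinuousOn m (Set.Ici 0) := by
      intro t0 ht0
      have hgC : ContinuousOn (fun t => ∑ i, ∑ j, |P t i j - P t0 i j|) (Set.Ici (0:ℝ)) := by
        apply continuousOn_finset_sum
        intro i _
        apply continuousOn_finset_sum
        intro j _
        exact ((hPc i j).sub continuousOn_const).abs
      have hg : Filter.Tendsto (fun t => ∑ i, ∑ j, |P t i j - P t0 i j|)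
          (nhdsWithin t0 (Set.Ici 0)) (nhds 0) := by
        have h0 : Filter.Tendsto (fun t => ∑ i, ∑ j, |P t i j - P t0 i j|)
            (nhdsWithin t0 (Set.Ici 0)) (nhds (∑ i, ∑ j, |P t0 i j - P t0 i j|)) := hgC t0 ht0
        simpa using h0
      have hlow : ∀ t ∈ Set.Ici (0:ℝ),
          m t0 - (∑ i, ∑ j, |P t i j - P t0 i j|) ≤ m t := by
        intro t _
        have h := aux_lipschitz hp (hsym t) (hsym t0)
        have heq : (∑ i, ∑ j, |P t0 i j - P t i j|) = ∑ i, ∑ j, |P t i j - P t0 i j| := by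
          refine Finset.sum_congr rfl fun i _ => Finset.sum_congr rfl fun j _ => abs_sub_comm _ _
        rw [heq] at h
        linarith
      have hhigh : ∀ t ∈ Set.Ici (0:ℝ),
          m t ≤ m t0 + ∑ i, ∑ j, |P t i j - P t0 i j| := by
        intro t _
        exact aux_lipschitz hp (hsym t0) (hsym t)
      have hlim1 : Filter.Tendsto (fun t => m t0 - ∑ i, ∑ j, |P t i j - P t0 i j|)
          (nhdsWithin t0 (Set.Ici 0)) (nhds (m t0)) := by
        have := Filter.Tendsto.sub (tendsto_const_nhds (x := m t0)) hg
        simpa using this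
      have hlim2 : Filter.Tendsto (fun t => m t0 + ∑ i, ∑ j, |P t i j - P t0 i j|)
          (nhdsWithin t0 (Set.Ici 0)) (nhds (m t0)) := by
        have := Filter.Tendsto.add (tendsto_const_nhds (x := m t0)) hg
        simpa using this
      exact tendsto_of_tendsto_of_tendsto_of_le_of_le' hlim1 hlim2
        (Filter.eventually_of_mem self_mem_nhdsWithin hlow)
        (Filter.eventually_of_mem self_mem_nhdsWithin hhigh)
    -- the bad set and its infimum
    set S : Set ℝ := {t | 0 ≤ t ∧ m t ≤ 1 / κ₀} with hSdef
    have hSne : S.Nonempty := ⟨t1, ht1, ht1'⟩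
    have hSbdd : BddBelow S := ⟨0, fun s hs => hs.1⟩
    have hSclosed : IsClosed S := by
      have : S = Set.Ici 0 ∩ m ⁻¹' Set.Iic (1 / κ₀) := by
        ext t; simp [hSdef, Set.mem_Ici, Set.mem_Iic]
      rw [this]
      exact hmc.preimage_isClosed_of_isClosed isClosed_Ici isClosed_Iic
    set T := sInf S with hT
    have hTS : T ∈ S := hSclosed.csInf_mem hSne hSbdd
    have hT0 : 0 ≤ T := hTS.1
    have hTne : T ≠ 0 := by
      intro h
      rw [h] at hTS
      exact absurd hTS.2 (not_le.2 hlam0)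
    have hTpos : 0 < T := lt_of_le_of_ne hT0 (Ne.symm hTne)
    have hgood : ∀ s, 0 ≤ s → s < T → 1 / κ₀ < m s := by
      intro s hs0 hsT
      by_contra hle
      push_neg at hle
      exact absurd (csInf_le hSbdd ⟨hs0, hle⟩) (not_le.2 hsT)
    -- the minimal eigenvector at time T
    obtain ⟨x, hx1, hxT⟩ := aux_exists_eigvec_min hp (hsym T)
    set f : ℝ → ℝ := fun τ => x ⬝ᵥ (P τ *ᵥ x) with hf
    have hfD : ∀ t ≥ (0:ℝ), HasDerivAt f (x ⬝ᵥ (P' t *ᵥ x)) t := by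
      intro t ht
      have hsum : HasDerivAt (fun τ => ∑ i, x i * ∑ j, P τ i j * x j)
          (∑ i, x i * ∑ j, P' t i j * x j) t := by
        apply HasDerivAt.fun_sum
        intro i _
        exact (HasDerivAt.fun_sum fun j _ => (hP' t ht i j).mul_const (x j)).const_mul (x i)
      have he : x ⬝ᵥ (P' t *ᵥ x) = ∑ i, x i * ∑ j, P' t i j * x j := by
        simp [dotProduct, mulVec]
      rw [he]
      apply hsum.congr_of_eventuallyEq
      filter_upwards with τ
      simp [hf, dotProduct, mulVec]
    have hfc : ContinuousOn f (Set.Ici 0) :=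
      fun t ht => ((hfD t ht).continuousAt).continuousWithinAt
    set u : ℝ → ℝ := fun τ => (f τ - 1 / κ₀) * Real.exp (β₀ * τ) with hu
    have huc : ContinuousOn u (Set.Icc 0 T) := by
      apply ContinuousOn.mul
      · exact (hfc.mono Set.Icc_subset_Ici_self).sub continuousOn_const
      · exact (Real.continuous_exp.comp (continuous_const.mul continuous_id)).continuousOn
    have hud : ∀ s ∈ Set.Ioo (0:ℝ) T, HasDerivAt u
        ((x ⬝ᵥ (P' s *ᵥ x) + β₀ * (f s - 1 / κ₀)) * Real.exp (β₀ * s)) s := by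
      intro s hs
      have h1 : HasDerivAt (fun τ => f τ - 1 / κ₀) (x ⬝ᵥ (P' s *ᵥ x)) s :=
        (hfD s hs.1.le).sub_const _
      have h2 : HasDerivAt (fun τ => Real.exp (β₀ * τ)) (Real.exp (β₀ * s) * β₀) s := by
        have hlin : HasDerivAt (fun τ : ℝ => β₀ * τ) β₀ s := by
          simpa using (hasDerivAt_id s).const_mul β₀
        exact (Real.hasDerivAt_exp (β₀ * s)).comp s hlin
      have := h1.fun_mul h2
      refine this.congr_deriv ?_
      ring
    have hud_nonneg : ∀ s ∈ Set.Ioo (0:ℝ) T,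
        0 ≤ (x ⬝ᵥ (P' s *ᵥ x) + β₀ * (f s - 1 / κ₀)) * Real.exp (β₀ * s) := by
      intro s hs
      have hms : 1 / κ₀ < m s := hgood s hs.1.le hs.2
      have hms0 : 0 < m s := lt_trans (by positivity) hms
      have hPDs : (P s).PosDef := aux_posdef (hsym s) hms0
      have hR := hRiccati s hs.1.le hPDs
      have hfs : m s ≤ f s := by
        have := aux_lam_min_le (hsym s) x
        rwa [hx1, mul_one] at this
      have hgval : x ⬝ᵥ (P' s *ᵥ x)
          = (-(β₀ * (1 - 1 / (κ₀ * m s)))) * f s + (W s *ᵥ x) ⬝ᵥ (W s *ᵥ x) := by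
        rw [hR, add_mulVec, smul_mulVec, dotProduct_add, dotProduct_smul, smul_eq_mul]
        congr 1
        rw [← mulVec_mulVec, dotProduct_mulVec x, vecMul_transpose]
      rw [hgval]
      have hn : 0 ≤ (W s *ᵥ x) ⬝ᵥ (W s *ᵥ x) :=
        Finset.sum_nonneg fun i _ => mul_self_nonneg _
      apply mul_nonneg _ (Real.exp_pos _).le
      have hdiv : 1 / κ₀ ≤ f s / (κ₀ * m s) := by
        rw [div_le_div_iff₀ hκ₀ (mul_pos hκ₀ hms0)]
        nlinarith
      have hexp : (-(β₀ * (1 - 1 / (κ₀ * m s)))) * f s + β₀ * (f s - 1 / κ₀)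
          = β₀ * (f s / (κ₀ * m s) - 1 / κ₀) := by
        field_simp
        ring
      nlinarith [mul_le_mul_of_nonneg_left hdiv hβ₀.le]
    have humono : MonotoneOn u (Set.Icc 0 T) := by
      apply monotoneOn_of_deriv_nonneg (convex_Icc 0 T) huc
      · intro s hs
        rw [interior_Icc] at hs
        exact (hud s hs).differentiableAt.differentiableWithinAt
      · intro s hs
        rw [interior_Icc] at hs
        rw [(hud s hs).deriv]
        exact hud_nonneg s hs
    have h0T : u 0 ≤ u T :=
      humono (Set.left_mem_Icc.2 hT0) (Set.right_mem_Icc.2 hT0) hT0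
    have hu0 : 0 < u 0 := by
      have hf0 : m 0 ≤ f 0 := by
        have := aux_lam_min_le (hsym 0) x
        rwa [hx1, mul_one] at this
      have hpos : 0 < f 0 - 1 / κ₀ := by
        have : (1 : ℝ) / κ₀ < m 0 := hlam0
        linarith
      have : u 0 = (f 0 - 1 / κ₀) * 1 := by simp [hu]
      rw [this, mul_one]
      exact hpos
    have huT : u T ≤ 0 := by
      have hfT : f T ≤ 1 / κ₀ := by
        have : f T = m T := hxT
        rw [this]
        exact hTS.2
      have := Real.exp_pos (β₀ * T)
      have hnp : f T - 1 / κ₀ ≤ 0 := by linarith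
      exact mul_nonpos_of_nonpos_of_nonneg hnp (Real.exp_pos _).le
    linarith
  intro t ht
  have hmt := key t ht
  have hPD : (P t).PosDef := aux_posdef (hsym t) (lt_trans (by positivity) hmt)
  have hS := aux_sup_inv hκ₀ (hsym t) hPD hmt
  refine ⟨hPD, hmt, hPD.inv, hS, ?_⟩
  apply mul_nonneg hβ₀.le
  have : (⨆ i, ((hsym t).inv).eigenvalues i) / κ₀ < 1 := (div_lt_one hκ₀).2 hS
  linarith
end
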